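/- Let α = (α₁, α₂) ∈ ℝ² with α₂ ≠ 0, and suppose there is a constant c_α > 0 such that ‖∇f‖_{L²(𝕋²)}·‖⟨∇f,α⟩‖_{L²(𝕋²)} ≥ c_α·‖f‖²_{L²(𝕋²)} for all mean-zero f ∈ H¹(𝕋²). Then c_α ≤ |α|/√5, where |α| = √(α₁² + α₂²). -/

import Mathlib

open Real

/- We model a mean-zero function `f ∈ H¹(𝕋²)` on the flat torus `𝕋² = ℝ²/(2πℤ)²`
by its Fourier coefficients `a : ℤ × ℤ → ℂ`, `f = Σ aₖ e^{ik·x}`, `a₀ = 0`.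
By Parseval, `‖f‖²_{L²} = (2π)² Σ |aₖ|²`, `‖∇f‖²_{L²} = (2π)² Σ |k|²|aₖ|²` and
`‖⟨∇f,α⟩‖²_{L²} = (2π)² Σ ⟨k,α⟩²|aₖ|²`.  All inequalities below are homogeneous
in the number of `L²`-norm factors, so the constant `(2π)²` is harmlessly dropped. -/

/-- `‖f‖²_{L²(𝕋²)}` (modulo the factor `(2π)²`). -/
noncomputable def normSq (a : ℤ × ℤ → ℂ) : ℝ := ∑' k : ℤ × ℤ, ‖a k‖ ^ 2

/-- `‖∇f‖²_{L²(𝕋²)}` (modulo the factor `(2π)²`). -/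
noncomputable def gradSq (a : ℤ × ℤ → ℂ) : ℝ :=
  ∑' k : ℤ × ℤ, (((k.1 : ℝ)) ^ 2 + ((k.2 : ℝ)) ^ 2) * ‖a k‖ ^ 2

/-- `‖⟨∇f, α⟩‖²_{L²(𝕋²)}` (modulo the factor `(2π)²`). -/
noncomputable def dirSq (α : ℝ × ℝ) (a : ℤ × ℤ → ℂ) : ℝ :=
  ∑' k : ℤ × ℤ, (α.1 * k.1 + α.2 * k.2) ^ 2 * ‖a k‖ ^ 2

/-- `f ∈ H¹(𝕋²)`. -/
def IsH1 (a : ℤ × ℤ → ℂ) : Prop :=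
  Summable (fun k : ℤ × ℤ => ‖a k‖ ^ 2) ∧
  Summable (fun k : ℤ × ℤ => (((k.1 : ℝ)) ^ 2 + ((k.2 : ℝ)) ^ 2) * ‖a k‖ ^ 2)

/-! Testing the inequality on the single Fourier mode `e^{i k·x}` gives `c_α ≤ |k| |⟨k, α⟩|` for
every `k ≠ 0`. If `θ = α₁ / α₂` equals `r / s`, the mode `k = (s, -r)` makes the right-hand side
vanish. Otherwise Hurwitz's theorem gives `p / q` with `q` arbitrarily large and
`|q θ - p| < 1 / (√5 q)`; for `k = (q, -p)` the right-hand side is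
`|α₂| |k| |q θ - p| ≤ |α| / √5 + |α₂| / q`. Hurwitz's theorem itself comes from the continued
fraction of `θ`: among any three consecutive convergents one satisfies the bound, since otherwise
the ratio of two consecutive denominators would have to be the golden ratio. -/

noncomputable def completeQuot (θ : ℝ) : ℕ → ℝ
  | 0 => θ
  | n + 1 => (Int.fract (completeQuot θ n))⁻¹

/- Indices are shifted by one from the textbook convention: `convNum θ 0 / convDen θ 0` is the
formal fraction `1 / 0`, and `convNum θ (n + 1) / convDen θ (n + 1)` is the `n`-th convergent. -/
noncomputable def convNum (θ : ℝ) : ℕ → ℤ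
  | 0 => 1
  | 1 => ⌊θ⌋
  | n + 2 => ⌊completeQuot θ (n + 1)⌋ * convNum θ (n + 1) + convNum θ n

noncomputable def convDen (θ : ℝ) : ℕ → ℤ
  | 0 => 0
  | 1 => 1
  | n + 2 => ⌊completeQuot θ (n + 1)⌋ * convDen θ (n + 1) + convDen θ n

noncomputable def convErr (θ : ℝ) (n : ℕ) : ℝ := convDen θ n * θ - convNum θ n

section ContinuedFraction

variable {θ : ℝ}

theorem Irrational.completeQuot (hθ : Irrational θ) : ∀ n, Irrational (completeQuot θ n)
  | 0 => hθ
  | n + 1 => ((hθ.completeQuot n).sub_intCast _).inv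

theorem completeQuot_succ_mul_fract (hθ : Irrational θ) (n : ℕ) :
    completeQuot θ (n + 1) * Int.fract (completeQuot θ n) = 1 :=
  inv_mul_cancel₀ (Int.fract_pos.2 ((hθ.completeQuot n).ne_int _)).ne'

theorem one_lt_completeQuot_succ (hθ : Irrational θ) (n : ℕ) : 1 < completeQuot θ (n + 1) :=
  (one_lt_inv₀ (Int.fract_pos.2 ((hθ.completeQuot n).ne_int _))).2 (Int.fract_lt_one _)

theorem one_le_floor_completeQuot_succ (hθ : Irrational θ) (n : ℕ) :
    1 ≤ ⌊completeQuot θ (n + 1)⌋ :=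
  Int.le_floor.2 (by exact_mod_cast (one_lt_completeQuot_succ hθ n).le)

theorem one_le_convDen_succ (hθ : Irrational θ) : ∀ n, 1 ≤ convDen θ (n + 1)
  | 0 => le_rfl
  | 1 => by simpa [convDen] using one_le_floor_completeQuot_succ hθ 0
  | n + 2 => by
    have ha := one_le_floor_completeQuot_succ hθ (n + 1)
    have hq := one_le_convDen_succ hθ (n + 1)
    have hq' := one_le_convDen_succ hθ n
    rw [convDen]
    nlinarith

theorem convDen_nonneg (hθ : Irrational θ) : ∀ n, 0 ≤ convDen θ n
  | 0 => le_rfl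
  | n + 1 => zero_le_one.trans (one_le_convDen_succ hθ n)

theorem convDen_add_le (hθ : Irrational θ) (n : ℕ) :
    convDen θ n + convDen θ (n + 1) ≤ convDen θ (n + 2) := by
  have ha := one_le_floor_completeQuot_succ hθ n
  have hq := convDen_nonneg hθ (n + 1)
  rw [convDen]
  nlinarith

theorem le_convDen_succ (hθ : Irrational θ) : ∀ n : ℕ, (n : ℤ) ≤ convDen θ (n + 1)
  | 0 => zero_le_one
  | 1 => one_le_convDen_succ hθ 1
  | n + 2 => by
    have h₁ : 1 ≤ convDen θ (n + 1) := one_le_convDen_succ hθ n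
    have h₂ : (n : ℤ) + 1 ≤ convDen θ (n + 2) := by exact_mod_cast le_convDen_succ hθ (n + 1)
    have h₃ : convDen θ (n + 1) + convDen θ (n + 2) ≤ convDen θ (n + 3) := convDen_add_le hθ (n + 1)
    show ((n + 2 : ℕ) : ℤ) ≤ convDen θ (n + 3)
    push_cast
    omega

theorem convErr_add_two (θ : ℝ) (n : ℕ) :
    convErr θ (n + 2) = ⌊completeQuot θ (n + 1)⌋ * convErr θ (n + 1) + convErr θ n := by
  simp only [convErr, convNum, convDen]
  push_cast
  ring

theorem convErr_succ_mul_completeQuot (hθ : Irrational θ) :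
    ∀ n, convErr θ (n + 1) * completeQuot θ (n + 1) = -convErr θ n
  | 0 => by
    have h := completeQuot_succ_mul_fract hθ 0
    simp only [convErr, convNum, convDen, completeQuot] at h ⊢
    push_cast
    rw [one_mul, Int.self_sub_floor]
    linear_combination h
  | n + 1 => by
    have ih := convErr_succ_mul_completeQuot hθ n
    have h := completeQuot_succ_mul_fract hθ (n + 1)
    rw [Int.fract] at h
    rw [convErr_add_two]
    linear_combination completeQuot θ (n + 2) * ih - convErr θ (n + 1) * h

theorem convDen_mul_convErr_sub (θ : ℝ) :
    ∀ n, convDen θ (n + 1) * convErr θ n - convDen θ n * convErr θ (n + 1) = (-1) ^ (n + 1)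
  | 0 => by simp [convErr, convNum, convDen]
  | n + 1 => by
    rw [convErr_add_two, convDen, pow_succ, ← convDen_mul_convErr_sub θ n]
    push_cast
    ring

/- Consecutive errors have opposite signs, so the determinant identity
`convDen_mul_convErr_sub` turns into an identity between their absolute values. -/
theorem abs_convErr_mul_add (hθ : Irrational θ) (n : ℕ) :
    |convErr θ n| * convDen θ (n + 1) + |convErr θ (n + 1)| * convDen θ n = 1 := by
  set T := completeQuot θ (n + 1)
  have hT : 0 < T := zero_lt_one.trans (one_lt_completeQuot_succ hθ n)
  have he : convErr θ n = -(convErr θ (n + 1) * T) := by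
    linarith [convErr_succ_mul_completeQuot hθ n]
  have hq : (0 : ℝ) ≤ convDen θ (n + 1) * T + convDen θ n := by
    have := convDen_nonneg hθ n
    have := convDen_nonneg hθ (n + 1)
    positivity
  calc |convErr θ n| * convDen θ (n + 1) + |convErr θ (n + 1)| * convDen θ n
      = |convErr θ (n + 1)| * (convDen θ (n + 1) * T + convDen θ n) := by
        rw [he, abs_neg, abs_mul, abs_of_pos hT]
        ring
    _ = |convDen θ (n + 1) * convErr θ n - convDen θ n * convErr θ (n + 1)| := by
        rw [he, show ∀ a b e : ℝ, a * -(e * T) - b * e = -(e * (a * T + b)) by intros; ring,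
          abs_neg, abs_mul, abs_of_nonneg hq]
    _ = 1 := by simp [convDen_mul_convErr_sub]

end ContinuedFraction

section Hurwitz

open scoped goldenRatio

theorem sq_add_sq_le_mul_mul {s x y u v : ℝ} (h : u * y + v * x = 1)
    (hu : 1 ≤ s * u * x) (hv : 1 ≤ s * v * y) : x ^ 2 + y ^ 2 ≤ s * x * y :=
  calc x ^ 2 + y ^ 2 ≤ y ^ 2 * (s * u * x) + x ^ 2 * (s * v * y) := by
        nlinarith [mul_le_mul_of_nonneg_left hu (sq_nonneg y),
          mul_le_mul_of_nonneg_left hv (sq_nonneg x)]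
    _ = s * x * y * (u * y + v * x) := by ring
    _ = s * x * y := by rw [h, mul_one]

/- `x² + y² - √5 x y = (y - φ x) (y + ψ x)`, and the second factor exceeds `x` when `y > φ x`. -/
theorem le_goldenRatio_mul_of_sq_add_sq_le {x y : ℝ} (hx : 0 < x)
    (h : x ^ 2 + y ^ 2 ≤ √5 * x * y) : y ≤ φ * x := by
  by_contra! hy
  have hfactor : (y - φ * x) * (y + ψ * x) = x ^ 2 + y ^ 2 - √5 * x * y := by
    unfold Real.goldenRatio Real.goldenConj
    linear_combination x ^ 2 / 4 * Real.sq_sqrt (show (0 : ℝ) ≤ 5 by norm_num)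
  have h₂ : 0 < y + ψ * x := by
    nlinarith [Real.goldenRatio_add_goldenConj]
  nlinarith [mul_pos (sub_pos.2 hy) h₂]

variable {θ : ℝ}

theorem Irrational.exists_gt_sqrt_five_mul_abs_convErr_mul_lt_one (hθ : Irrational θ) (m : ℕ) :
    ∃ n, m < n ∧ √5 * |convErr θ n| * convDen θ n < 1 := by
  by_contra! hbad
  have hq₁ : 1 ≤ convDen θ (m + 1) := one_le_convDen_succ hθ m
  have hq₂ : 1 ≤ convDen θ (m + 2) := one_le_convDen_succ hθ (m + 1)
  have hq₁₂₃ : (convDen θ (m + 1) + convDen θ (m + 2) : ℝ) ≤ convDen θ (m + 3) := by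
    exact_mod_cast convDen_add_le hθ (m + 1)
  have h₂₁ : (convDen θ (m + 2) : ℝ) ≤ φ * convDen θ (m + 1) :=
    le_goldenRatio_mul_of_sq_add_sq_le (by exact_mod_cast hq₁)
      (sq_add_sq_le_mul_mul (abs_convErr_mul_add hθ (m + 1)) (hbad _ (by omega))
        (hbad _ (by omega)))
  have h₃₂ : (convDen θ (m + 3) : ℝ) ≤ φ * convDen θ (m + 2) :=
    le_goldenRatio_mul_of_sq_add_sq_le (by exact_mod_cast hq₂)
      (sq_add_sq_le_mul_mul (abs_convErr_mul_add hθ (m + 2)) (hbad _ (by omega))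
        (hbad _ (by omega)))
  have h₂₃ : φ * convDen θ (m + 2) ≤ (convDen θ (m + 3) : ℝ) := by
    refine le_of_mul_le_mul_left ?_ Real.goldenRatio_pos
    calc φ * (φ * convDen θ (m + 2)) = convDen θ (m + 2) + φ * convDen θ (m + 2) := by
          linear_combination (convDen θ (m + 2) : ℝ) * Real.goldenRatio_sq
      _ ≤ φ * (convDen θ (m + 1) + convDen θ (m + 2)) := by linarith
      _ ≤ φ * convDen θ (m + 3) := by gcongr
  exact (Real.goldenRatio_irrational.mul_intCast (by omega : convDen θ (m + 2) ≠ 0)).ne_int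
    (convDen θ (m + 3)) (le_antisymm h₂₃ h₃₂)

theorem Irrational.exists_int_int_abs_mul_sub_lt (hθ : Irrational θ) (N : ℕ) :
    ∃ p q : ℤ, N < q ∧ |q * θ - p| < 1 / (√5 * q) := by
  obtain ⟨n, hn, hlt⟩ := hθ.exists_gt_sqrt_five_mul_abs_convErr_mul_lt_one (N + 1)
  obtain ⟨k, rfl⟩ : ∃ k, n = k + 1 := ⟨n - 1, by omega⟩
  have hq : (N : ℤ) < convDen θ (k + 1) := by
    have := le_convDen_succ hθ k
    omega
  refine ⟨convNum θ (k + 1), convDen θ (k + 1), hq, ?_⟩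
  have hq₀ : (0 : ℝ) < convDen θ (k + 1) := by exact_mod_cast (Int.natCast_nonneg N).trans_lt hq
  rw [lt_div_iff₀ (by positivity)]
  simpa [convErr, mul_comm, mul_left_comm] using hlt

end Hurwitz

open Complex in
/- Triangle inequality for `q + p i = q (1 + θ i) - (q θ - p) i`. -/
theorem sqrt_sq_add_sq_le (θ q p : ℝ) (hq : 0 ≤ q) :
    √(q ^ 2 + p ^ 2) ≤ q * √(1 + θ ^ 2) + |q * θ - p| := by
  have hsplit : (q : ℂ) + p * I = q * ((1 : ℝ) + θ * I) - ((q * θ - p : ℝ) : ℂ) * I := by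
    push_cast
    ring
  have := norm_sub_le ((q : ℂ) * ((1 : ℝ) + θ * I)) (((q * θ - p : ℝ) : ℂ) * I)
  rwa [← hsplit, norm_add_mul_I, norm_mul, norm_add_mul_I, norm_mul, norm_I, mul_one,
    Complex.norm_real, Complex.norm_real, Real.norm_of_nonneg hq, one_pow, Real.norm_eq_abs] at this

theorem sqrt_sq_add_sq_mul_abs_sub_le {α₁ α₂ : ℝ} (hα₂ : α₂ ≠ 0) {q p : ℝ} (hq : 0 ≤ q) :
    √(q ^ 2 + p ^ 2) * |α₁ * q - α₂ * p| ≤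
      √(α₁ ^ 2 + α₂ ^ 2) * (q * |q * (α₁ / α₂) - p|) + |α₂| * |q * (α₁ / α₂) - p| ^ 2 := by
  have hinner : α₁ * q - α₂ * p = α₂ * (q * (α₁ / α₂) - p) := by
    field_simp
  have hα : |α₂| * √(1 + (α₁ / α₂) ^ 2) = √(α₁ ^ 2 + α₂ ^ 2) := by
    rw [← Real.sqrt_sq_eq_abs, ← Real.sqrt_mul (sq_nonneg _)]
    congr 1
    field_simp
    ring
  calc √(q ^ 2 + p ^ 2) * |α₁ * q - α₂ * p|
      ≤ (q * √(1 + (α₁ / α₂) ^ 2) + |q * (α₁ / α₂) - p|) * (|α₂| * |q * (α₁ / α₂) - p|) := by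
        rw [hinner, abs_mul]
        gcongr
        exact sqrt_sq_add_sq_le _ _ _ hq
    _ = _ := by
        rw [← hα]
        ring

def DirectionalPoincare (α : ℝ × ℝ) (c : ℝ) : Prop :=
  ∀ a : ℤ × ℤ → ℂ, IsH1 a → a 0 = 0 →
    √(gradSq a) * √(dirSq α a) ≥ c * normSq a

theorem hasSum_mul_norm_single_sq {ι : Type*} [DecidableEq ι] (g : ι → ℝ) (k : ι) :
    HasSum (fun j => g j * ‖(Pi.single k 1 : ι → ℂ) j‖ ^ 2) (g k) := by
  convert hasSum_single (f := fun j => g j * ‖(Pi.single k 1 : ι → ℂ) j‖ ^ 2) k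
    fun j hj => by simp [Pi.single_eq_of_ne hj] using 1
  simp

namespace DirectionalPoincare

variable {α : ℝ × ℝ} {c : ℝ}

theorem le_sqrt_mul_abs (h : DirectionalPoincare α c) {k : ℤ × ℤ} (hk : k ≠ 0) :
    c ≤ √((k.1 : ℝ) ^ 2 + (k.2 : ℝ) ^ 2) * |α.1 * k.1 + α.2 * k.2| := by
  have hnorm := hasSum_mul_norm_single_sq (fun _ => 1) k
  have hgrad := hasSum_mul_norm_single_sq (fun j => (j.1 : ℝ) ^ 2 + (j.2 : ℝ) ^ 2) k
  have hdir := hasSum_mul_norm_single_sq (fun j => (α.1 * j.1 + α.2 * j.2) ^ 2) k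
  simp only [one_mul] at hnorm
  have := h (Pi.single k 1) ⟨hnorm.summable, hgrad.summable⟩ (Pi.single_eq_of_ne hk.symm _)
  rwa [normSq, gradSq, dirSq, hnorm.tsum_eq, hgrad.tsum_eq, hdir.tsum_eq, mul_one,
    Real.sqrt_sq_eq_abs] at this

theorem nonpos_of_not_irrational {α₁ α₂ : ℝ} (h : DirectionalPoincare (α₁, α₂) c)
    (hα₂ : α₂ ≠ 0) (hθ : ¬Irrational (α₁ / α₂)) : c ≤ 0 := by
  obtain ⟨r, hr⟩ := not_not.1 hθ
  have hinner : α₁ * ((r.den : ℤ) : ℝ) + α₂ * ((-r.num : ℤ) : ℝ) = 0 := by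
    rw [Rat.cast_def, div_eq_div_iff (by positivity) hα₂] at hr
    push_cast
    linear_combination -hr
  have := h.le_sqrt_mul_abs (k := ((r.den : ℤ), -r.num)) (by simp [r.den_ne_zero])
  rwa [hinner, abs_zero, mul_zero] at this

theorem le_add_of_abs_mul_sub_lt {α₁ α₂ : ℝ} (h : DirectionalPoincare (α₁, α₂) c)
    (hα₂ : α₂ ≠ 0) {p q : ℤ} (hq : 0 < q) (hpq : |q * (α₁ / α₂) - p| < 1 / (√5 * q)) :
    c ≤ √(α₁ ^ 2 + α₂ ^ 2) / √5 + |α₂| / q := by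
  have hq₀ : (0 : ℝ) < q := by exact_mod_cast hq
  set e := |q * (α₁ / α₂) - p|
  have hqe : q * e ≤ 1 / √5 :=
    calc q * e ≤ q * (1 / (√5 * q)) := by gcongr
      _ = 1 / √5 := by field_simp
  have he : e ≤ 1 / q := hpq.le.trans <|
    one_div_le_one_div_of_le hq₀ (le_mul_of_one_le_left hq₀.le (Real.one_le_sqrt.2 (by norm_num)))
  have he₁ : e ≤ 1 := he.trans ((div_le_one hq₀).2 (by exact_mod_cast hq))
  have hmode := h.le_sqrt_mul_abs (k := (q, -p)) (by simp [hq.ne'])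
  push_cast at hmode
  calc c ≤ √(q ^ 2 + p ^ 2) * |α₁ * q - α₂ * p| := by simpa [sub_eq_add_neg] using hmode
    _ ≤ √(α₁ ^ 2 + α₂ ^ 2) * (q * e) + |α₂| * e ^ 2 :=
        sqrt_sq_add_sq_mul_abs_sub_le hα₂ hq₀.le
    _ ≤ √(α₁ ^ 2 + α₂ ^ 2) * (1 / √5) + |α₂| * (1 / q) := by
        gcongr
        exact (pow_le_of_le_one (abs_nonneg _) he₁ two_ne_zero).trans he
    _ = √(α₁ ^ 2 + α₂ ^ 2) / √5 + |α₂| / q := by rw [mul_one_div, mul_one_div]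

theorem le_of_irrational {α₁ α₂ : ℝ} (h : DirectionalPoincare (α₁, α₂) c) (hα₂ : α₂ ≠ 0)
    (hθ : Irrational (α₁ / α₂)) : c ≤ √(α₁ ^ 2 + α₂ ^ 2) / √5 := by
  refine le_of_forall_pos_le_add fun ε hε => ?_
  obtain ⟨N, hN⟩ := exists_nat_gt (|α₂| / ε)
  obtain ⟨p, q, hNq, hpq⟩ := hθ.exists_int_int_abs_mul_sub_lt N
  have hq : (N : ℝ) < q := by exact_mod_cast hNq
  refine (h.le_add_of_abs_mul_sub_lt hα₂ (by omega) hpq).trans ?_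
  gcongr
  rw [div_le_iff₀ (by linarith [N.cast_nonneg (α := ℝ)]), mul_comm]
  rw [div_lt_iff₀ hε] at hN
  linarith [mul_lt_mul_of_pos_right hq hε]

end DirectionalPoincare

theorem stmt_12 (α₁ α₂ cα : ℝ) (hα₂ : α₂ ≠ 0) (hc : 0 < cα)
    (h : ∀ a : ℤ × ℤ → ℂ, IsH1 a → a 0 = 0 →
      Real.sqrt (gradSq a) * Real.sqrt (dirSq (α₁, α₂) a) ≥ cα * normSq a) :
    cα ≤ Real.sqrt (α₁ ^ 2 + α₂ ^ 2) / Real.sqrt 5 := by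
  by_cases hθ : Irrational (α₁ / α₂)
  · exact DirectionalPoincare.le_of_irrational h hα₂ hθ
  · exact absurd (DirectionalPoincare.nonpos_of_not_irrational h hα₂ hθ) hc.not_ge
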